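/- arXiv:1707.05716 — 5 statements merged into one kernel-verified Lean document; each statement's English description precedes it below -/
import Mathlib

section
/- Let p be an odd prime and l a positive integer, and let γ ≥ 1 be the exponent of 2 in ord_p(2). Then 2 exactly divides ord_p(2^l) (i.e., ord_p(2^l) ≡ 2 mod 4) if and only if 2^(γ−1) exactly divides l. -/
theorem two_exactly_divides_iff (p : ℕ) (hp : p.Prime) (hodd : Odd p) (l : ℕ) (hl : 0 < l)
    (γ : ℕ) (hγ1 : 1 ≤ γ)
    (hγ : 2 ^ γ ∣ orderOf (2 : ZMod p) ∧ ¬ 2 ^ (γ + 1) ∣ orderOf (2 : ZMod p)) :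
    (2 ∣ orderOf ((2 : ZMod p) ^ l) ∧ ¬ 4 ∣ orderOf ((2 : ZMod p) ^ l)) ↔
      (2 ^ (γ - 1) ∣ l ∧ ¬ 2 ^ γ ∣ l) := by
  set d := orderOf (2 : ZMod p) with hd
  have hdne : d ≠ 0 := by
    intro h0
    rw [h0] at hγ
    exact hγ.2 (dvd_zero _)
  have hlne : l ≠ 0 := hl.ne'
  have hgcdne : Nat.gcd d l ≠ 0 := fun h => hdne (Nat.eq_zero_of_gcd_eq_zero_left h)
  have hene : d / Nat.gcd d l ≠ 0 :=
    Nat.div_ne_zero_iff_of_dvd (Nat.gcd_dvd_left d l) |>.mpr ⟨hdne, hgcdne⟩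
  have p2 : Nat.Prime 2 := Nat.prime_two
  have hvd : d.factorization 2 = γ := by
    have h1 := (p2.pow_dvd_iff_le_factorization hdne).mp hγ.1
    have h2 : ¬ γ + 1 ≤ d.factorization 2 := fun h =>
      hγ.2 ((p2.pow_dvd_iff_le_factorization hdne).mpr h)
    omega
  rw [orderOf_pow' (2 : ZMod p) hlne, ← hd]
  have key : (d / Nat.gcd d l).factorization 2 = γ - min γ (l.factorization 2) := by
    rw [Nat.factorization_div (Nat.gcd_dvd_left d l), Nat.factorization_gcd hdne hlne]
    simp [hvd]
  constructor
  · rintro ⟨h2, h4⟩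
    have h2' := (p2.pow_dvd_iff_le_factorization hene).mp (by rw [pow_one]; exact h2)
    have h4' : ¬ 2 ≤ (d / Nat.gcd d l).factorization 2 := fun h =>
      h4 (by have := (p2.pow_dvd_iff_le_factorization hene).mpr h; norm_num at this ⊢; exact this)
    rw [key] at h2' h4'
    have hv : l.factorization 2 = γ - 1 := by omega
    constructor
    · exact (p2.pow_dvd_iff_le_factorization hlne).mpr (by omega)
    · intro h
      have := (p2.pow_dvd_iff_le_factorization hlne).mp h
      omega
  · rintro ⟨h1, h2⟩
    have h1' := (p2.pow_dvd_iff_le_factorization hlne).mp h1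
    have h2' : ¬ γ ≤ l.factorization 2 := fun h =>
      h2 ((p2.pow_dvd_iff_le_factorization hlne).mpr h)
    have hv : l.factorization 2 = γ - 1 := by omega
    have he : (d / Nat.gcd d l).factorization 2 = 1 := by rw [key]; omega
    constructor
    · have := (p2.pow_dvd_iff_le_factorization hene).mpr (by omega : 1 ≤ (d / Nat.gcd d l).factorization 2)
      rwa [pow_one] at this
    · intro h
      have h' : 2 ^ 2 ∣ d / Nat.gcd d l := by norm_num; exact h
      have := (p2.pow_dvd_iff_le_factorization hene).mp h'
      omega
end

section
/- Let p be an odd prime and l a positive integer, and let χ_l(j) = 0 if j divides 2^{ls}+1 for some s ≥ 1 and χ_l(j) = 1 otherwise. Then χ_l(p^i) = χ_l(p) for every positive integer i. -/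
/-!
If `p ∣ x + 1` with `p` odd, then `x ^ p ^ k + 1 = x ^ p ^ k - (-1) ^ p ^ k` is divisible by
`p ^ (k + 1)` (the usual lifting of `p ∣ a - b` to `p ^ (k + 1) ∣ a ^ p ^ k - b ^ p ^ k`).
So if `p ∣ 2 ^ (l * s) + 1`, then `p ^ i ∣ 2 ^ (l * (s * p ^ (i - 1))) + 1`.
-/

theorem dvd_add_pow_of_dvd_add {R : Type*} [CommRing R] {p : ℕ} (hp : Odd p) {a b : R}
    (h : (p : R) ∣ a + b) (k : ℕ) : (p ^ (k + 1) : R) ∣ a ^ p ^ k + b ^ p ^ k := by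
  have := dvd_sub_pow_of_dvd_sub (a := a) (b := -b) (by rwa [sub_neg_eq_add]) k
  rwa [hp.pow.neg_pow, sub_neg_eq_add] at this

theorem Nat.dvd_add_pow_of_dvd_add {p a b : ℕ} (hp : Odd p) (h : p ∣ a + b) (k : ℕ) :
    p ^ (k + 1) ∣ a ^ p ^ k + b ^ p ^ k := by
  exact_mod_cast _root_.dvd_add_pow_of_dvd_add (R := ℤ) hp (a := a) (b := b) (mod_cast h) k

theorem exists_pow_dvd_pow_mul_add_one_iff {p : ℕ} (hp : Odd p) (a l : ℕ) {i : ℕ} (hi : 0 < i) :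
    (∃ s : ℕ, 1 ≤ s ∧ p ^ i ∣ a ^ (l * s) + 1) ↔ ∃ s : ℕ, 1 ≤ s ∧ p ∣ a ^ (l * s) + 1 := by
  refine ⟨fun ⟨s, hs, hdvd⟩ ↦ ⟨s, hs, (dvd_pow_self p hi.ne').trans hdvd⟩, ?_⟩
  rintro ⟨s, hs, hdvd⟩
  refine ⟨s * p ^ (i - 1), hs.trans (Nat.le_mul_of_pos_right s (pow_pos hp.pos _)), ?_⟩
  have hlift := Nat.dvd_add_pow_of_dvd_add hp hdvd (i - 1)
  rwa [Nat.sub_add_cancel hi, one_pow, ← pow_mul, mul_assoc] at hlift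

open scoped Classical in
theorem chi_prime_power_general (p : ℕ) (hodd : Odd p) (l : ℕ) :
    ∀ i : ℕ, 0 < i →
      (if ∃ s : ℕ, 1 ≤ s ∧ p ^ i ∣ 2 ^ (l * s) + 1 then (0 : ℕ) else 1) =
        (if ∃ s : ℕ, 1 ≤ s ∧ p ∣ 2 ^ (l * s) + 1 then (0 : ℕ) else 1) := by
  intro i hi
  simp only [exists_pow_dvd_pow_mul_add_one_iff hodd 2 l hi]

open scoped Classical in
theorem chi_prime_power (p : ℕ) (hp : p.Prime) (hodd : Odd p) (l : ℕ) (hl : 0 < l) :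
    ∀ i : ℕ, 0 < i →
      (if ∃ s : ℕ, 1 ≤ s ∧ p ^ i ∣ 2 ^ (l * s) + 1 then (0 : ℕ) else 1) =
        (if ∃ s : ℕ, 1 ≤ s ∧ p ∣ 2 ^ (l * s) + 1 then (0 : ℕ) else 1) :=
  chi_prime_power_general p hodd l
end

section
/- Let p be an odd prime and l a positive integer. Define λ_l(j) = 0 if there exists an odd integer s ≥ 1 with j ∣ 2^{ls}+1, and λ_l(j) = 1 otherwise. Then λ_l(p) = 0 if and only if ord_p(2^l) ≡ 2 (mod 4). -/
open scoped Classical in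
theorem lambda_zero_iff (p : ℕ) (hp : p.Prime) (hodd : Odd p) (l : ℕ) (hl : 0 < l) :
    (if ∃ s : ℕ, Odd s ∧ p ∣ 2 ^ (l * s) + 1 then (0 : ℕ) else 1) = 0 ↔
      orderOf ((2 : ZMod p) ^ l) % 4 = 2 := by
  haveI : Fact p.Prime := ⟨hp⟩
  have hp2 : p ≠ 2 := by rintro rfl; exact absurd (Nat.odd_iff.mp hodd) (by decide)
  have hp3 : 2 < p := lt_of_le_of_ne hp.two_le (Ne.symm hp2)
  have h2 : (2 : ZMod p) ≠ 0 := by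
    intro h
    have h' : ((2 : ℕ) : ZMod p) = 0 := by exact_mod_cast h
    have := (ZMod.natCast_eq_zero_iff 2 p).mp h'
    have := Nat.le_of_dvd (by norm_num) this
    omega
  set a : ZMod p := (2 : ZMod p) ^ l with ha_def
  have ha : a ≠ 0 := pow_ne_zero _ h2
  have hfin : IsOfFinOrder a := by
    rw [isOfFinOrder_iff_pow_eq_one]
    exact ⟨p - 1, by omega, ZMod.pow_card_sub_one_eq_one ha⟩
  have hdpos : 0 < orderOf a := hfin.orderOf_pos
  have hne : (-1 : ZMod p) ≠ 1 := by
    intro h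
    apply h2
    linear_combination -h
  have key : ∀ s : ℕ, (p ∣ 2 ^ (l * s) + 1) ↔ a ^ s = -1 := by
    intro s
    rw [← ZMod.natCast_eq_zero_iff]
    push_cast
    rw [pow_mul, ← ha_def]
    constructor
    · intro h; exact eq_neg_of_add_eq_zero_left h
    · intro h; rw [h]; ring
  rw [show (if (∃ s : ℕ, Odd s ∧ p ∣ 2 ^ (l * s) + 1) then (0:ℕ) else 1) = 0 ↔
      (∃ s : ℕ, Odd s ∧ p ∣ 2 ^ (l * s) + 1) from by split_ifs with h <;> simp [h]]
  set d := orderOf a with hd_def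
  constructor
  · rintro ⟨s, hs, hdvd⟩
    have has : a ^ s = -1 := (key s).mp hdvd
    have hsne : a ^ s ≠ 1 := by rw [has]; exact hne
    have hnd : ¬ d ∣ s := fun h => hsne (orderOf_dvd_iff_pow_eq_one.mp h)
    have h2s : d ∣ 2 * s := by
      rw [orderOf_dvd_iff_pow_eq_one, mul_comm, pow_mul, has]
      ring
    have hde : 2 ∣ d := by
      by_contra hcon
      have hco : Nat.Coprime d 2 := by
        rw [Nat.coprime_two_right, Nat.odd_iff]
        omega
      exact hnd (hco.dvd_of_dvd_mul_left h2s)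
    obtain ⟨m, hm⟩ := hde
    have hms : m ∣ s := by
      have hh : 2 * m ∣ 2 * s := hm ▸ h2s
      exact (mul_dvd_mul_iff_left (two_ne_zero)).mp hh
    obtain ⟨k, rfl⟩ := hms
    have hmo : Odd m := (Nat.odd_mul.mp hs).1
    have := Nat.odd_iff.mp hmo
    omega
  · intro h4
    set m := d / 2 with hm_def
    have hm : d = 2 * m := by omega
    have hmo : Odd m := by rw [Nat.odd_iff]; omega
    have hm0 : 0 < m := by omega
    have hsq : (a ^ m) ^ 2 = 1 := by
      rw [← pow_mul, show m * 2 = d from by omega, pow_orderOf_eq_one]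
    have hcases : a ^ m = 1 ∨ a ^ m = -1 := by
      have h0 : (a ^ m - 1) * (a ^ m + 1) = 0 := by linear_combination hsq
      rcases mul_eq_zero.mp h0 with h | h
      · left; exact sub_eq_zero.mp h
      · right; exact eq_neg_of_add_eq_zero_left h
    rcases hcases with h1 | hneg1
    · exfalso
      have hdm : d ∣ m := orderOf_dvd_iff_pow_eq_one.mpr h1
      have := Nat.le_of_dvd hm0 hdm
      omega
    · exact ⟨m, hmo, (key m).mpr hneg1⟩
end

section
/- Let p be an odd prime, l and r positive integers, with ord_p(2^l) odd, 2 a primitive root modulo p^2, and p ∤ l, and let χ_l be as defined: χ_l(d) = 0 iff d ∣ 2^{ls}+1 for some s ≥ 1. Then Σ_{d ∣ p^r, d>1} χ_l(d) φ(d)/ord_d(2^l) = r·gcd(p−1, l), where the sum is over all divisors d > 1 of p^r. -/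
private lemma zmod_two_pow_eq_one_iff (n a : ℕ) :
    (2 : ZMod n) ^ a = 1 ↔ n ∣ 2 ^ a - 1 := by
  have h2 : ((2 : ℕ) : ZMod n) = 2 := by push_cast; ring
  rw [← h2, ← Nat.cast_pow, show (1 : ZMod n) = ((1 : ℕ) : ZMod n) by push_cast; ring,
    ZMod.natCast_eq_natCast_iff, Nat.ModEq.comm, Nat.modEq_iff_dvd' (Nat.one_le_two_pow)]

private lemma val_two_pow (p : ℕ) (hp : p.Prime) (hodd : Odd p)
    (hprim : orderOf (2 : ZMod (p ^ 2)) = p * (p - 1)) (j : ℕ) :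
    padicValNat p (2 ^ (p ^ j * (p - 1)) - 1) = j + 1 := by
  haveI : Fact p.Prime := ⟨hp⟩
  have hp2 : 2 < p := by
    rcases hodd with ⟨m, hm⟩
    have := hp.two_le; omega
  have hnd2 : ¬ p ∣ 2 ^ (p - 1) := by
    intro h
    have := hp.dvd_of_dvd_pow h
    have := Nat.le_of_dvd (by norm_num) this
    omega
  have hferm : p ∣ 2 ^ (p - 1) - 1 := by
    rw [← zmod_two_pow_eq_one_iff]
    exact ZMod.pow_card_sub_one_eq_one (by
      intro h
      have := (ZMod.natCast_eq_zero_iff 2 p).mp (by push_cast at h ⊢; exact h)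
      have := Nat.le_of_dvd (by norm_num) this
      omega)
  have hne : 2 ^ (p - 1) - 1 ≠ 0 := by
    have : 2 ^ 1 ≤ 2 ^ (p - 1) := Nat.pow_le_pow_right (by norm_num) (by omega)
    omega
  have hnsq : ¬ p ^ 2 ∣ 2 ^ (p - 1) - 1 := by
    intro h
    have h1 : (2 : ZMod (p ^ 2)) ^ (p - 1) = 1 := (zmod_two_pow_eq_one_iff _ _).mpr h
    have h2 : orderOf (2 : ZMod (p ^ 2)) ∣ p - 1 := orderOf_dvd_of_pow_eq_one h1
    rw [hprim] at h2
    have h3 := Nat.le_of_dvd (by omega) h2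
    have h4 : 2 * (p - 1) ≤ p * (p - 1) := Nat.mul_le_mul_right _ (by omega)
    omega
  have hv1 : padicValNat p (2 ^ (p - 1) - 1) = 1 := by
    have hlb : 1 ≤ padicValNat p (2 ^ (p - 1) - 1) := by
      rw [← (padicValNat_dvd_iff_le hne : p ^ 1 ∣ _ ↔ _), pow_one]; exact hferm
    have hub : ¬ 2 ≤ padicValNat p (2 ^ (p - 1) - 1) := by
      intro h
      exact hnsq ((padicValNat_dvd_iff_le hne).mpr h)
    omega
  have := padicValNat.pow_sub_pow (p := p) (x := 2 ^ (p - 1)) (y := 1) hodd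
    (by
      have : 2 ^ 1 ≤ 2 ^ (p - 1) := Nat.pow_le_pow_right (by norm_num) (by omega)
      omega)
    (by simpa using hferm) hnd2 (n := p ^ j) (pow_ne_zero _ hp.pos.ne')
  rw [one_pow, ← pow_mul, padicValNat.prime_pow, hv1] at this
  rw [show p ^ j * (p - 1) = (p - 1) * p ^ j by ring, this]
  omega

private lemma order_two_prime_pow (p : ℕ) (hp : p.Prime) (hodd : Odd p)
    (hprim : orderOf (2 : ZMod (p ^ 2)) = p * (p - 1)) (k : ℕ) (hk : 1 ≤ k) :
    orderOf (2 : ZMod (p ^ k)) = p ^ (k - 1) * (p - 1) := by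
  haveI : Fact p.Prime := ⟨hp⟩
  have hp2 : 2 < p := by
    rcases hodd with ⟨m, hm⟩
    have := hp.two_le; omega
  set d := orderOf (2 : ZMod (p ^ k)) with hd
  have hne : ∀ m : ℕ, 2 ^ (p ^ m * (p - 1)) - 1 ≠ 0 := by
    intro m
    have h1 : 1 ≤ p ^ m * (p - 1) := Nat.one_le_iff_ne_zero.mpr
      (Nat.mul_ne_zero (pow_ne_zero _ hp.pos.ne') (by omega))
    have : 2 ^ 1 ≤ 2 ^ (p ^ m * (p - 1)) := Nat.pow_le_pow_right (by norm_num) h1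
    omega
  have hdvd_up : d ∣ p ^ (k - 1) * (p - 1) := by
    apply orderOf_dvd_of_pow_eq_one
    rw [zmod_two_pow_eq_one_iff]
    rw [padicValNat_dvd_iff_le (hne (k - 1)), val_two_pow p hp hodd hprim]
    omega
  have hDpos : 0 < p ^ (k - 1) * (p - 1) :=
    Nat.mul_pos (pow_pos hp.pos _) (by omega)
  have hdpos : 0 < d := Nat.pos_of_dvd_of_pos hdvd_up hDpos
  have hpk_dvd : p ^ k ∣ 2 ^ d - 1 :=
    (zmod_two_pow_eq_one_iff _ _).mp (pow_orderOf_eq_one _)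
  have h2dne : 2 ^ d - 1 ≠ 0 := by
    have : 2 ^ 1 ≤ 2 ^ d := Nat.pow_le_pow_right (by norm_num) hdpos
    omega
  have hpd : p ∣ 2 ^ d - 1 := dvd_trans (dvd_pow_self p (by omega)) hpk_dvd
  have hnd2d : ¬ p ∣ 2 ^ d := by
    intro h
    have := hp.dvd_of_dvd_pow h
    have := Nat.le_of_dvd (by norm_num) this
    omega
  -- step 1 : p - 1 ∣ d
  have hstep1 : (p - 1) ∣ d := by
    have hlte := padicValNat.pow_sub_pow (p := p) (x := 2 ^ d) (y := 1) hodd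
      (by
        have : 2 ^ 1 ≤ 2 ^ d := Nat.pow_le_pow_right (by norm_num) hdpos
        omega)
      (by simpa using hpd) hnd2d (n := p) hp.pos.ne'
    rw [one_pow, ← pow_mul, padicValNat_self] at hlte
    have hval1 : 1 ≤ padicValNat p (2 ^ d - 1) := by
      rw [← (padicValNat_dvd_iff_le h2dne : p ^ 1 ∣ _ ↔ _), pow_one]; exact hpd
    have h2dp_ne : 2 ^ (d * p) - 1 ≠ 0 := by
      have h1 : 1 ≤ d * p := Nat.one_le_iff_ne_zero.mpr (Nat.mul_ne_zero hdpos.ne' hp.pos.ne')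
      have : 2 ^ 1 ≤ 2 ^ (d * p) := Nat.pow_le_pow_right (by norm_num) h1
      omega
    have hsq : p ^ 2 ∣ 2 ^ (d * p) - 1 := by
      rw [padicValNat_dvd_iff_le h2dp_ne, hlte]; omega
    have hdvd : p * (p - 1) ∣ d * p := by
      rw [← hprim]
      exact orderOf_dvd_of_pow_eq_one ((zmod_two_pow_eq_one_iff _ _).mpr hsq)
    obtain ⟨c, hc⟩ := hdvd
    have : d * p = ((p - 1) * c) * p := by rw [hc]; ring
    have hdc : d = (p - 1) * c := Nat.eq_of_mul_eq_mul_right hp.pos this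
    exact ⟨c, hdc⟩
  -- step 2 : p ^ (k - 1) ∣ d
  have hstep2 : p ^ (k - 1) ∣ d := by
    set a := d.factorization p with ha
    have hpa : p ^ a ∣ d := Nat.ordProj_dvd d p
    set m := ordCompl[p] d with hm
    have hdm : p ^ a * m = d := Nat.ordProj_mul_ordCompl_eq_self d p
    have hmd : m ∣ d := Nat.ordCompl_dvd d p
    have hmcop : ¬ p ∣ m := Nat.not_dvd_ordCompl hp hdpos.ne'
    have hmdvd : m ∣ p ^ (k - 1) * (p - 1) := hmd.trans hdvd_up
    have hmp1 : m ∣ p - 1 := by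
      have hcop : Nat.Coprime m (p ^ (k - 1)) :=
        Nat.Coprime.pow_right _ ((hp.coprime_iff_not_dvd.mpr hmcop).symm)
      exact Nat.Coprime.dvd_of_dvd_mul_left hcop hmdvd
    have hddvd : d ∣ p ^ a * (p - 1) := by
      rw [← hdm]
      exact mul_dvd_mul_left _ hmp1
    obtain ⟨c, hc⟩ := hddvd
    have hdvdpow : p ^ k ∣ 2 ^ (p ^ a * (p - 1)) - 1 := by
      refine dvd_trans hpk_dvd ?_
      have : (2 ^ d - 1) ∣ (2 ^ d) ^ c - 1 ^ c := Nat.sub_dvd_pow_sub_pow _ 1 c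
      rwa [one_pow, ← pow_mul, ← hc] at this
    have : k ≤ a + 1 := by
      rw [← val_two_pow p hp hodd hprim a]
      exact (padicValNat_dvd_iff_le (hne a)).mp hdvdpow
    exact dvd_trans (pow_dvd_pow p (by omega)) hpa
  have hco : Nat.Coprime (p ^ (k - 1)) (p - 1) :=
    Nat.Coprime.pow_left _ (by
      have h := Nat.dvd_sub (Nat.gcd_dvd_left p (p - 1)) (Nat.gcd_dvd_right p (p - 1))
      rw [show p - (p - 1) = 1 by omega] at h
      exact Nat.dvd_one.mp h)
  exact Nat.dvd_antisymm hdvd_up (Nat.Coprime.mul_dvd_of_dvd_of_dvd hco hstep2 hstep1)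

private lemma chi_prime_pow (p l : ℕ) (hp : p.Prime) (hodd : Odd p)
    (hord_odd : Odd (orderOf ((2 : ZMod p) ^ l)))
    (k : ℕ) (hk : 1 ≤ k) : ¬ ∃ s : ℕ, 1 ≤ s ∧ p ^ k ∣ 2 ^ (l * s) + 1 := by
  rintro ⟨s, hs, hdvd⟩
  haveI : Fact p.Prime := ⟨hp⟩
  have hp2 : 2 < p := by
    rcases hodd with ⟨m, hm⟩
    have := hp.two_le; omega
  haveI : Fact (2 < p) := ⟨hp2⟩
  have hpd : p ∣ 2 ^ (l * s) + 1 := dvd_trans (dvd_pow_self p (by omega)) hdvd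
  have h0 : ((2 ^ (l * s) + 1 : ℕ) : ZMod p) = 0 :=
    (ZMod.natCast_eq_zero_iff _ _).mpr hpd
  push_cast at h0
  have hx : (2 : ZMod p) ^ (l * s) = -1 := by linear_combination h0
  have hx2 : ((2 : ZMod p) ^ l) ^ (2 * s) = 1 := by
    rw [← pow_mul, show l * (2 * s) = (l * s) * 2 by ring, pow_mul, hx]
    ring
  have hdvd2 : orderOf ((2 : ZMod p) ^ l) ∣ 2 * s := orderOf_dvd_of_pow_eq_one hx2
  have hco : Nat.Coprime (orderOf ((2 : ZMod p) ^ l)) 2 := by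
    exact Nat.coprime_two_right.mpr hord_odd
  have hds : orderOf ((2 : ZMod p) ^ l) ∣ s := hco.dvd_of_dvd_mul_left hdvd2
  have h1 : ((2 : ZMod p) ^ l) ^ s = 1 := orderOf_dvd_iff_pow_eq_one.mp hds
  rw [← pow_mul, hx] at h1
  exact ZMod.neg_one_ne_one h1

open scoped Classical in
theorem t_value_primitive_root (p : ℕ) (hp : p.Prime) (hodd : Odd p) (l r : ℕ)
    (hl : 0 < l) (hr : 0 < r)
    (hord_odd : Odd (orderOf ((2 : ZMod p) ^ l)))
    (hprim : orderOf (2 : ZMod (p ^ 2)) = p * (p - 1))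
    (hpl : ¬ p ∣ l) :
    ∑ d ∈ (p ^ r).divisors.filter (fun d => 1 < d),
        (if ∃ s : ℕ, 1 ≤ s ∧ d ∣ 2 ^ (l * s) + 1 then (0 : ℚ) else 1) *
          (Nat.totient d : ℚ) / (orderOf ((2 : ZMod d) ^ l) : ℚ) =
      (r : ℚ) * (Nat.gcd (p - 1) l : ℚ) := by
  haveI : Fact p.Prime := ⟨hp⟩
  have hp2 : 2 < p := by
    rcases hodd with ⟨m, hm⟩
    have := hp.two_le; omega
  set g := Nat.gcd (p - 1) l with hg
  have hg1 : g ∣ p - 1 := Nat.gcd_dvd_left _ _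
  have hgpos : 0 < g := Nat.gcd_pos_of_pos_right _ hl
  have hset : (p ^ r).divisors.filter (fun d => 1 < d)
      = (Finset.Icc 1 r).image (fun k => p ^ k) := by
    ext d
    simp only [Finset.mem_filter, Nat.mem_divisors, Finset.mem_image, Finset.mem_Icc]
    constructor
    · rintro ⟨⟨hdvd, _⟩, hd1⟩
      obtain ⟨k, hkr, rfl⟩ := (Nat.dvd_prime_pow hp).mp hdvd
      refine ⟨k, ⟨?_, hkr⟩, rfl⟩
      by_contra h
      have : k = 0 := by omega
      subst this
      simp at hd1
    · rintro ⟨k, ⟨hk1, hkr⟩, rfl⟩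
      refine ⟨⟨pow_dvd_pow p hkr, pow_ne_zero _ hp.pos.ne'⟩, ?_⟩
      exact Nat.one_lt_pow (by omega) hp.one_lt
  rw [hset, Finset.sum_image (fun a _ b _ h => Nat.pow_right_injective hp.two_le h)]
  have hterm : ∀ k ∈ Finset.Icc 1 r,
      (if ∃ s : ℕ, 1 ≤ s ∧ p ^ k ∣ 2 ^ (l * s) + 1 then (0 : ℚ) else 1) *
          (Nat.totient (p ^ k) : ℚ) / (orderOf ((2 : ZMod (p ^ k)) ^ l) : ℚ) = (g : ℚ) := by
    intro k hk
    rw [Finset.mem_Icc] at hk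
    have hk1 : 1 ≤ k := hk.1
    rw [if_neg (chi_prime_pow p l hp hodd hord_odd k hk1), one_mul]
    set D := p ^ (k - 1) * (p - 1) with hD
    have hDpos : 0 < D := Nat.mul_pos (pow_pos hp.pos _) (by omega)
    have hgD : g ∣ D := hg1.trans (dvd_mul_left _ _)
    have htot : Nat.totient (p ^ k) = D := Nat.totient_prime_pow hp hk1
    have hordl : orderOf ((2 : ZMod (p ^ k)) ^ l) = D / g := by
      rw [orderOf_pow' _ hl.ne', order_two_prime_pow p hp hodd hprim k hk1]
      congr 1
      exact Nat.Coprime.gcd_mul_left_cancel (p - 1)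
        (Nat.Coprime.pow_left _ ((hp.coprime_iff_not_dvd).mpr hpl))
    rw [htot, hordl]
    have hDg : D / g ≠ 0 := by
      have := Nat.div_pos (Nat.le_of_dvd hDpos hgD) hgpos
      omega
    rw [Nat.cast_div hgD (by exact_mod_cast hgpos.ne'), div_div_eq_mul_div, mul_comm,
      mul_div_assoc, div_self (by exact_mod_cast hDpos.ne'), mul_one]
  rw [Finset.sum_congr rfl hterm, Finset.sum_const, Nat.card_Icc]
  simp
end

section
/- Let p be an odd prime with 2 a primitive root modulo p^2, let l and r be positive integers, and let γ be the exponent of 2 in ord_p(2). If 2^γ ∣ l, then Σ_{i=1}^{r} φ(p^i)/ord_{p^i}(2^l) = Σ_{i=1}^{r} gcd(p^{i−1}(p−1), l). -/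
/-!
Write `oᵢ` for the order of `2` modulo `pⁱ`. Reducing modulo `p` gives `o₁ ∣ oᵢ`, and lifting
`2^{o₁} ≡ 1 (mod p)` to `2^{p^{i-1} o₁} ≡ 1 (mod pⁱ)` gives `oᵢ ∣ p^{i-1} o₁`; for `i = 2` the
hypothesis then forces `o₁ = p - 1`.
Primitivity modulo `p²` also says `2^{p-1} = 1 + p c` with `p ∤ c`, and such an element has
order exactly `p^{i-1}` modulo `pⁱ`. Hence `oᵢ = p^{i-1}(p-1) = φ(pⁱ)`, and each summand is
`oᵢ / ord(2^l) = gcd(oᵢ, l)`.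
-/

lemma IsOfFinOrder.orderOf_div_orderOf_pow {G : Type*} [Monoid G] {x : G} (hx : IsOfFinOrder x)
    (n : ℕ) : orderOf x / orderOf (x ^ n) = (orderOf x).gcd n := by
  rw [hx.orderOf_pow, Nat.div_div_self (Nat.gcd_dvd_left _ _) hx.orderOf_pos.ne']

section OrderOfIntCast

variable (a : ℤ)

lemma intCast_pow_eq_one_iff (m n : ℕ) : (a : ZMod m) ^ n = 1 ↔ (m : ℤ) ∣ a ^ n - 1 := by
  rw [← ZMod.intCast_zmod_eq_zero_iff_dvd, Int.cast_sub, Int.cast_pow, Int.cast_one, sub_eq_zero]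

lemma orderOf_intCast_dvd_of_dvd {m n : ℕ} (h : m ∣ n) :
    orderOf (a : ZMod m) ∣ orderOf (a : ZMod n) := by
  have := orderOf_map_dvd (ZMod.castHom h (ZMod m) : ZMod n →* ZMod m) a
  rwa [MonoidHom.coe_coe, map_intCast] at this

lemma orderOf_intCast_prime_pow_succ_dvd (p k : ℕ) :
    orderOf (a : ZMod (p ^ (k + 1))) ∣ p ^ k * orderOf (a : ZMod p) := by
  have hdvd : (p : ℤ) ∣ a ^ orderOf (a : ZMod p) - 1 :=
    (intCast_pow_eq_one_iff a p _).mp (pow_orderOf_eq_one _)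
  apply orderOf_dvd_of_pow_eq_one
  rw [intCast_pow_eq_one_iff, mul_comm, pow_mul, Nat.cast_pow]
  simpa only [one_pow] using dvd_sub_pow_of_dvd_sub hdvd k

variable {p : ℕ} (hp : p.Prime) (h : orderOf (a : ZMod (p ^ 2)) = p * (p - 1))
include hp h

lemma orderOf_intCast_prime_eq_sub_one : orderOf (a : ZMod p) = p - 1 := by
  have := Fact.mk hp
  have hunit : IsUnit (a : ZMod (p ^ 2)) :=
    (orderOf_pos_iff.mp (h ▸ Nat.mul_pos hp.pos (Nat.sub_pos_of_lt hp.one_lt))).isUnit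
  have ha : (a : ZMod p) ≠ 0 := by
    simpa only [map_intCast] using
      (hunit.map (ZMod.castHom (dvd_pow_self p two_ne_zero) (ZMod p))).ne_zero
  refine Nat.dvd_antisymm (ZMod.orderOf_dvd_card_sub_one ha) (Nat.dvd_of_mul_dvd_mul_left hp.pos ?_)
  simpa only [← h, pow_one] using orderOf_intCast_prime_pow_succ_dvd a p 1

lemma orderOf_intCast_pow_sub_one_prime_pow_succ (hp2 : p ≠ 2) (k : ℕ) :
    orderOf ((a : ZMod (p ^ (k + 1))) ^ (p - 1)) = p ^ k := by
  obtain ⟨c, hc⟩ : (p : ℤ) ∣ a ^ (p - 1) - 1 := by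
    rw [← intCast_pow_eq_one_iff, ← orderOf_intCast_prime_eq_sub_one a hp h,
      pow_orderOf_eq_one]
  have hpc : ¬ (p : ℤ) ∣ c := by
    rintro ⟨e, rfl⟩
    have h1 : (a : ZMod (p ^ 2)) ^ (p - 1) = 1 :=
      (intCast_pow_eq_one_iff a _ _).mpr ⟨e, by rw [hc, Nat.cast_pow]; ring⟩
    have h2 := Nat.le_of_dvd (Nat.sub_pos_of_lt hp.one_lt) (h ▸ orderOf_dvd_of_pow_eq_one h1)
    exact h2.not_gt (lt_mul_left (Nat.sub_pos_of_lt hp.one_lt) hp.one_lt)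
  have ha : (a : ZMod (p ^ (k + 1))) ^ (p - 1) = 1 + p * c := by
    rw [← Int.cast_pow, sub_eq_iff_eq_add'.mp hc, Int.cast_add, Int.cast_mul, Int.cast_natCast,
      Int.cast_one]
  rw [ha]
  exact ZMod.orderOf_one_add_mul_prime hp hp2 c hpc k

theorem orderOf_intCast_prime_pow_succ (hp2 : p ≠ 2) (k : ℕ) :
    orderOf (a : ZMod (p ^ (k + 1))) = p ^ k * (p - 1) := by
  have ho₁ := orderOf_intCast_prime_eq_sub_one a hp h
  refine Nat.dvd_antisymm (ho₁ ▸ orderOf_intCast_prime_pow_succ_dvd a p k) ?_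
  have hcop : (p ^ k).Coprime (p - 1) :=
    ((Nat.coprime_self_sub_right hp.one_le).mpr (Nat.coprime_one_right p)).pow_left k
  refine hcop.mul_dvd_of_dvd_of_dvd ?_
    (ho₁ ▸ orderOf_intCast_dvd_of_dvd a (dvd_pow_self p k.succ_ne_zero))
  rw [← orderOf_intCast_pow_sub_one_prime_pow_succ a hp h hp2 k]
  exact orderOf_pow_dvd _

end OrderOfIntCast

theorem sum_primitive_root_general (p : ℕ) (hp : p.Prime) (hodd : Odd p)
    (hprim : orderOf (2 : ZMod (p ^ 2)) = p * (p - 1))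
    (l r : ℕ) :
    ∑ i ∈ Finset.Icc 1 r,
        (Nat.totient (p ^ i) : ℚ) / (orderOf ((2 : ZMod (p ^ i)) ^ l) : ℚ) =
      ∑ i ∈ Finset.Icc 1 r, (Nat.gcd (p ^ (i - 1) * (p - 1)) l : ℚ) := by
  refine Finset.sum_congr rfl fun i hi => ?_
  obtain ⟨k, rfl⟩ := Nat.exists_eq_add_of_le' (Finset.mem_Icc.mp hi).1
  have hord : orderOf (2 : ZMod (p ^ (k + 1))) = p ^ k * (p - 1) := by
    exact_mod_cast orderOf_intCast_prime_pow_succ 2 hp (by exact_mod_cast hprim)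
      (hodd.ne_two_of_dvd_nat dvd_rfl) k
  have hfin : IsOfFinOrder (2 : ZMod (p ^ (k + 1))) :=
    orderOf_pos_iff.mp (hord ▸ Nat.mul_pos (pow_pos hp.pos k) (Nat.sub_pos_of_lt hp.one_lt))
  rw [Nat.totient_prime_pow_succ hp, ← hord, ← Nat.cast_div_charZero (orderOf_pow_dvd l),
    hfin.orderOf_div_orderOf_pow, hord, Nat.add_sub_cancel]

theorem sum_primitive_root (p : ℕ) (hp : p.Prime) (hodd : Odd p)
    (hprim : orderOf (2 : ZMod (p ^ 2)) = p * (p - 1))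
    (l r γ : ℕ) (hl : 0 < l) (hr : 0 < r)
    (hγ : 2 ^ γ ∣ orderOf (2 : ZMod p) ∧ ¬ 2 ^ (γ + 1) ∣ orderOf (2 : ZMod p))
    (hdvd : 2 ^ γ ∣ l) :
    ∑ i ∈ Finset.Icc 1 r,
        (Nat.totient (p ^ i) : ℚ) / (orderOf ((2 : ZMod (p ^ i)) ^ l) : ℚ) =
      ∑ i ∈ Finset.Icc 1 r, (Nat.gcd (p ^ (i - 1) * (p - 1)) l : ℚ) :=
  sum_primitive_root_general p hp hodd hprim l r
end
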